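/- Let f : [0,1]^d → R be non-negative, differentiable and up-concave, u ∈ [0,1]^d, and define F(x) = ∫₀¹ [2/(3z(1−z/2)³)] ( f((z/2)·(x−u) + u) − f(u) ) dz. Then for all x, y ∈ [0,1]^d: ((1 − ||u||_∞)/4) f(y) − f((x+u)/2) ≤ (3/8) ⟨∇F(x), y − x⟩. -/

import Mathlib

/-!
Put `a(z) = (z/2)(x − u) + u`. Every coordinate of `a(z)` is at most `m = z/2 + (1 − z/2)‖u‖∞`,
so concavity of `f` on the ray from `y` through `a ∨ y` gives `f(a ∨ y) ≥ (1 − m) f(y)`.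
Splitting `y − a = (a ∨ y − a) − (a − a ∧ y)` and using `f(a ∧ y) ≥ 0` then yields
`(1 − z/2)(1 − ‖u‖∞) f(y) − 2 f(a) − (1 − z/2)⟨∇f(a), x − u⟩ ≤ ⟨∇f(a), y − x⟩`.
After multiplication by `1/(3(1 − z/2)³)` the left side is the derivative of
`G(z) = (2/3)((1 − ‖u‖∞) f(y)/(1 − z/2) − f(a(z))/(1 − z/2)²)`, so integrating over `[0,1]` gives
`(2/3)(1 − ‖u‖∞) f(y) − (8/3) f((x+u)/2) + (2/3) f(u) ≤ ⟨∇F(x), y − x⟩`, and `f(u) ≥ 0`.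
-/

open scoped RealInnerProductSpace

/-- The unit box `[0,1]^d` in Euclidean space. -/
def unitBox (d : ℕ) : Set (EuclideanSpace ℝ (Fin d)) :=
  {x | ∀ i, x i ∈ Set.Icc (0 : ℝ) 1}

/-- The sup norm `‖x‖_∞ = max_i |x_i|`. -/
noncomputable def supNorm {d : ℕ} (x : EuclideanSpace ℝ (Fin d)) : ℝ :=
  ⨆ i, |x i|

open Set MeasureTheory

lemma abs_le_of_hasDerivAt_zero_of_abs_sub_le {φ : ℝ → ℝ} {L K δ : ℝ} (hφ : HasDerivAt φ L 0)
    (hδ : 0 < δ) (h : ∀ t ∈ Ioo 0 δ, |φ t - φ 0| ≤ K * t) : |L| ≤ K := by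
  refine le_of_tendsto hφ.tendsto_slope_zero_right.abs ?_
  filter_upwards [Ioo_mem_nhdsGT hδ] with t ht
  rw [smul_eq_mul, zero_add, abs_mul, abs_inv, abs_of_pos ht.1, inv_mul_le_iff₀ ht.1, mul_comm]
  exact h t ht

section InnerProductSpace

variable {E : Type*} [NormedAddCommGroup E] [InnerProductSpace ℝ E] [CompleteSpace E]

lemma HasGradientAt.abs_inner_le_of_lipschitz_along_ray {s : Set E} {f : E → ℝ} {g p v : E}
    {M δ : ℝ} (hf : HasGradientAt f g p) (hp : p ∈ s) (hδ : 0 < δ)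
    (hray : ∀ t ∈ Ioo 0 δ, p + t • v ∈ s)
    (hLip : ∀ a ∈ s, ∀ b ∈ s, |f a - f b| ≤ M * ‖a - b‖) :
    |⟪g, v⟫| ≤ M * ‖v‖ := by
  have hline : HasDerivAt (fun t : ℝ => f (p + t • v)) ⟪g, v⟫ 0 := by
    simpa [HasLineDerivAt] using hf.hasFDerivAt.hasLineDerivAt v
  refine abs_le_of_hasDerivAt_zero_of_abs_sub_le hline hδ fun t ht => ?_
  simpa [norm_smul, abs_of_pos ht.1, mul_comm, mul_left_comm] using hLip _ (hray t ht) _ hp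

lemma inner_intervalIntegral_left {F : ℝ → E} {a b : ℝ} (hF : IntervalIntegrable F volume a b)
    (v : E) : ⟪∫ z in a..b, F z, v⟫ = ∫ z in a..b, ⟪F z, v⟫ := by
  rw [real_inner_comm, ← innerSL_apply_apply, ← (innerSL ℝ v).intervalIntegral_comp_comm hF]
  simp only [innerSL_apply_apply, real_inner_comm v]

variable [FiniteDimensional ℝ E] [MeasurableSpace E] [BorelSpace E]

lemma integrableOn_comp_of_hasGradientAt_of_norm_le {s : Set E} {f : E → ℝ} {g : E → E}
    {γ : ℝ → E} {a b C : ℝ} (hγ : Continuous γ) (hγs : ∀ z ∈ Icc a b, γ z ∈ s)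
    (hf : ∀ p ∈ s, HasGradientAt f (g p) p) (hC : ∀ p ∈ s, ‖g p‖ ≤ C) :
    IntegrableOn (fun z => g (γ z)) (Icc a b) := by
  -- On `s` the gradient agrees with the measurable map `(toDual ℝ E).symm ∘ fderiv ℝ f`.
  have hmeas : AEStronglyMeasurable (fun z => g (γ z)) (volume.restrict (Icc a b)) := by
    refine (((InnerProductSpace.toDual ℝ E).symm.continuous.measurable.comp
      ((measurable_fderiv ℝ f).comp hγ.measurable)).aestronglyMeasurable).congr ?_
    refine ae_restrict_of_forall_mem measurableSet_Icc fun z hz => ?_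
    simp [(hf _ (hγs z hz)).hasFDerivAt.fderiv]
  exact Integrable.of_bound hmeas C
    (ae_restrict_of_forall_mem measurableSet_Icc fun z hz => hC _ (hγs z hz))

end InnerProductSpace

section UnitBox

variable {d : ℕ}

lemma convex_unitBox : Convex ℝ (unitBox d) := by
  intro x hx y hy a b ha hb hab i
  simp only [PiLp.add_apply, PiLp.smul_apply, smul_eq_mul]
  constructor
  · nlinarith [(hx i).1, (hy i).1]
  · nlinarith [(hx i).2, (hy i).2]

lemma smul_sub_add_mem_unitBox {x u : EuclideanSpace ℝ (Fin d)} (hx : x ∈ unitBox d)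
    (hu : u ∈ unitBox d) {l : ℝ} (hl₀ : 0 ≤ l) (hl₁ : l ≤ 1) : l • (x - u) + u ∈ unitBox d := by
  rw [add_comm]
  exact convex_unitBox.add_smul_sub_mem hu hx ⟨hl₀, hl₁⟩

lemma abs_apply_le_of_hasGradientAt_of_lipschitzOn_unitBox {f : EuclideanSpace ℝ (Fin d) → ℝ}
    {gp p : EuclideanSpace ℝ (Fin d)} {M : ℝ} (hp : p ∈ unitBox d) (hf : HasGradientAt f gp p)
    (hLip : ∀ a ∈ unitBox d, ∀ b ∈ unitBox d, |f a - f b| ≤ M * ‖a - b‖) (i : Fin d) :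
    |gp i| ≤ M := by
  -- At a boundary point only one of `± eᵢ` points into the box, and one direction suffices.
  obtain ⟨σ, hσ, hray⟩ : ∃ σ : ℝ, |σ| = 1 ∧ ∀ t ∈ Ioo (0 : ℝ) (1 / 2), p i + t * σ ∈ Icc 0 1 := by
    rcases le_or_gt (p i) (1 / 2) with h | h
    · exact ⟨1, abs_one, fun t ht => ⟨by linarith [(hp i).1, ht.1], by linarith [ht.2]⟩⟩
    · exact ⟨-1, by simp, fun t ht => ⟨by linarith [ht.2], by linarith [(hp i).2, ht.1]⟩⟩
  have key := hf.abs_inner_le_of_lipschitz_along_ray (v := EuclideanSpace.single i σ) hp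
    one_half_pos (fun t ht j => ?_) hLip
  · simpa [EuclideanSpace.inner_single_right, PiLp.norm_single, hσ, abs_mul] using key
  · by_cases hj : j = i
    · subst hj
      simpa using hray t ht
    · simpa [hj] using hp j

lemma norm_le_of_hasGradientAt_of_lipschitzOn_unitBox {f : EuclideanSpace ℝ (Fin d) → ℝ}
    {gp p : EuclideanSpace ℝ (Fin d)} {M : ℝ} (hp : p ∈ unitBox d) (hf : HasGradientAt f gp p)
    (hLip : ∀ a ∈ unitBox d, ∀ b ∈ unitBox d, |f a - f b| ≤ M * ‖a - b‖) :
    ‖gp‖ ≤ √d * |M| := by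
  refine (pow_le_pow_iff_left₀ (norm_nonneg _) (by positivity) two_ne_zero).mp ?_
  rw [PiLp.norm_sq_eq_of_L2, mul_pow, Real.sq_sqrt (Nat.cast_nonneg _), sq_abs]
  calc ∑ i, ‖gp i‖ ^ 2 ≤ ∑ _i : Fin d, M ^ 2 := Finset.sum_le_sum fun i _ => by
        rw [Real.norm_eq_abs, sq_abs, sq_le_sq]
        exact (abs_apply_le_of_hasGradientAt_of_lipschitzOn_unitBox hp hf hLip i).trans
          (le_abs_self M)
    _ = d * M ^ 2 := by simp

lemma le_supNorm (u : EuclideanSpace ℝ (Fin d)) (i : Fin d) : u i ≤ supNorm u :=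
  (le_abs_self _).trans (le_ciSup (Set.finite_range fun j => |u j|).bddAbove i)

lemma supNorm_nonneg (u : EuclideanSpace ℝ (Fin d)) : 0 ≤ supNorm u :=
  Real.iSup_nonneg fun _ => abs_nonneg _

lemma supNorm_le_one {u : EuclideanSpace ℝ (Fin d)} (hu : u ∈ unitBox d) : supNorm u ≤ 1 :=
  Real.iSup_le (fun i => abs_le.2 ⟨by linarith [(hu i).1], (hu i).2⟩) zero_le_one

def coordMax (a b : EuclideanSpace ℝ (Fin d)) : EuclideanSpace ℝ (Fin d) :=
  WithLp.toLp 2 fun i => max (a i) (b i)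

def coordMin (a b : EuclideanSpace ℝ (Fin d)) : EuclideanSpace ℝ (Fin d) :=
  WithLp.toLp 2 fun i => min (a i) (b i)

@[simp] lemma coordMax_apply (a b : EuclideanSpace ℝ (Fin d)) (i : Fin d) :
    coordMax a b i = max (a i) (b i) := rfl

@[simp] lemma coordMin_apply (a b : EuclideanSpace ℝ (Fin d)) (i : Fin d) :
    coordMin a b i = min (a i) (b i) := rfl

lemma coordMax_mem_unitBox {a b : EuclideanSpace ℝ (Fin d)} (ha : a ∈ unitBox d)
    (hb : b ∈ unitBox d) : coordMax a b ∈ unitBox d := fun i =>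
  ⟨le_max_of_le_left (ha i).1, max_le (ha i).2 (hb i).2⟩

lemma coordMin_mem_unitBox {a b : EuclideanSpace ℝ (Fin d)} (ha : a ∈ unitBox d)
    (hb : b ∈ unitBox d) : coordMin a b ∈ unitBox d := fun i =>
  ⟨le_min (ha i).1 (hb i).1, min_le_of_left_le (ha i).2⟩

end UnitBox

section UpConcave

variable {d : ℕ}

def IsUpConcaveOn (s : Set (EuclideanSpace ℝ (Fin d))) (f : EuclideanSpace ℝ (Fin d) → ℝ)
    (g : EuclideanSpace ℝ (Fin d) → EuclideanSpace ℝ (Fin d)) : Prop :=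
  ∀ a ∈ s, ∀ b ∈ s, (∀ i, a i ≤ b i) → ⟪g b, b - a⟫ ≤ f b - f a ∧ f b - f a ≤ ⟪g a, b - a⟫

variable {s : Set (EuclideanSpace ℝ (Fin d))} {f : EuclideanSpace ℝ (Fin d) → ℝ}
  {g : EuclideanSpace ℝ (Fin d) → EuclideanSpace ℝ (Fin d)}

lemma IsUpConcaveOn.le_apply_add_smul_sub (hfg : IsUpConcaveOn s f g)
    {y p : EuclideanSpace ℝ (Fin d)} {t : ℝ} (hy : y ∈ s) (hp : p ∈ s) (hyp : ∀ i, y i ≤ p i)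
    (ht₀ : 0 ≤ t) (ht₁ : t ≤ 1) (hq : y + t • (p - y) ∈ s) :
    (1 - t) * f y + t * f p ≤ f (y + t • (p - y)) := by
  set q := y + t • (p - y)
  have hqi : ∀ i, q i = y i + t * (p i - y i) := fun i => by simp [q]
  have hyq : ∀ i, y i ≤ q i := fun i => by rw [hqi]; nlinarith [hyp i]
  have hqp : ∀ i, q i ≤ p i := fun i => by rw [hqi]; nlinarith [hyp i]
  have hrise := (hfg y hy q hq hyq).1
  have hfall := (hfg q hq p hp hqp).2
  have hqy : q - y = t • (p - y) := by simp [q]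
  have hpq : p - q = (1 - t) • (p - y) := by simp only [q]; module
  rw [hqy, real_inner_smul_right] at hrise
  rw [hpq, real_inner_smul_right] at hfall
  nlinarith [mul_le_mul_of_nonneg_left hrise (sub_nonneg.2 ht₁),
    mul_le_mul_of_nonneg_left hfall ht₀]

lemma IsUpConcaveOn.one_sub_mul_le_apply_coordMax (hfg : IsUpConcaveOn (unitBox d) f g)
    (hf₀ : ∀ x ∈ unitBox d, 0 ≤ f x) {a y : EuclideanSpace ℝ (Fin d)} {m : ℝ}
    (ha : a ∈ unitBox d) (hy : y ∈ unitBox d) (hm₀ : 0 ≤ m) (hm₁ : m ≤ 1)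
    (ham : ∀ i, a i ≤ m) : (1 - m) * f y ≤ f (coordMax a y) := by
  rcases hm₀.eq_or_lt with rfl | hm
  · have : coordMax a y = y := by
      ext i
      simp [le_antisymm (ham i) (ha i).1, (hy i).1]
    simp [this]
  -- `coordMax a y` lies on the segment from `y` to `p`, a fraction `m` of the way.
  set p := y + m⁻¹ • (coordMax a y - y)
  have hpi : ∀ i, p i = y i + m⁻¹ * (max (a i) (y i) - y i) := fun i => by simp [p]
  have hstep : ∀ i, 0 ≤ m⁻¹ * (max (a i) (y i) - y i) := fun i =>
    mul_nonneg (inv_nonneg.2 hm₀) (sub_nonneg.2 (le_max_right _ _))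
  have hp : p ∈ unitBox d := fun i => by
    refine ⟨by rw [hpi]; linarith [hstep i, (hy i).1], ?_⟩
    have : max (a i) (y i) - y i ≤ m * (1 - y i) := by
      rcases le_total (a i) (y i) with h | h
      · rw [max_eq_right h]; nlinarith [(hy i).2]
      · rw [max_eq_left h]; nlinarith [ham i, (hy i).1]
    rw [hpi]
    linarith [(inv_mul_le_iff₀ hm).2 this]
  have hyp : ∀ i, y i ≤ p i := fun i => by rw [hpi]; linarith [hstep i]
  have hq : y + m • (p - y) = coordMax a y := by
    simp only [p, add_sub_cancel_left, smul_smul, mul_inv_cancel₀ hm.ne', one_smul]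
    abel
  have := hfg.le_apply_add_smul_sub hy hp hyp hm₀ hm₁ (hq ▸ coordMax_mem_unitBox ha hy)
  rw [hq] at this
  nlinarith [hf₀ p hp]

lemma IsUpConcaveOn.apply_coordMax_add_apply_coordMin_sub_le (hfg : IsUpConcaveOn (unitBox d) f g)
    {a y : EuclideanSpace ℝ (Fin d)} (ha : a ∈ unitBox d) (hy : y ∈ unitBox d) :
    f (coordMax a y) + f (coordMin a y) - 2 * f a ≤ ⟪g a, y - a⟫ := by
  have hup := (hfg a ha _ (coordMax_mem_unitBox ha hy) fun i => le_max_left _ _).2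
  have hdown := (hfg _ (coordMin_mem_unitBox ha hy) a ha fun i => min_le_left _ _).1
  have hsplit : y - a = (coordMax a y - a) - (a - coordMin a y) := by
    ext i
    rcases le_total (a i) (y i) with h | h <;> simp [h]
  rw [hsplit, inner_sub_right]
  linarith

lemma IsUpConcaveOn.one_sub_mul_sub_two_mul_le_inner (hfg : IsUpConcaveOn (unitBox d) f g)
    (hf₀ : ∀ x ∈ unitBox d, 0 ≤ f x) {a y : EuclideanSpace ℝ (Fin d)} {m : ℝ}
    (ha : a ∈ unitBox d) (hy : y ∈ unitBox d) (hm₀ : 0 ≤ m) (hm₁ : m ≤ 1)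
    (ham : ∀ i, a i ≤ m) : (1 - m) * f y - 2 * f a ≤ ⟪g a, y - a⟫ := by
  have hmax := hfg.one_sub_mul_le_apply_coordMax hf₀ ha hy hm₀ hm₁ ham
  have hmin := hf₀ _ (coordMin_mem_unitBox ha hy)
  linarith [hfg.apply_coordMax_add_apply_coordMin_sub_le ha hy]

lemma IsUpConcaveOn.sub_le_inner_along_segment (hfg : IsUpConcaveOn (unitBox d) f g)
    (hf₀ : ∀ x ∈ unitBox d, 0 ≤ f x) {x y u : EuclideanSpace ℝ (Fin d)} (hx : x ∈ unitBox d)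
    (hy : y ∈ unitBox d) (hu : u ∈ unitBox d) {l : ℝ} (hl₀ : 0 ≤ l) (hl₁ : l ≤ 1) :
    (1 - l) * (1 - supNorm u) * f y - 2 * f (l • (x - u) + u)
      - (1 - l) * ⟪g (l • (x - u) + u), x - u⟫ ≤ ⟪g (l • (x - u) + u), y - x⟫ := by
  set a := l • (x - u) + u
  set m := l + (1 - l) * supNorm u
  have ham : ∀ i, a i ≤ m := fun i => by
    have : a i = l * x i + (1 - l) * u i := by simp [a]; ring
    rw [this]
    nlinarith [(hx i).2, le_supNorm u i]
  have hbound := hfg.one_sub_mul_sub_two_mul_le_inner hf₀ (smul_sub_add_mem_unitBox hx hu hl₀ hl₁)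
    hy (by nlinarith [supNorm_nonneg u]) (by nlinarith [supNorm_le_one hu]) ham
  have hsplit : y - x = (y - a) - (1 - l) • (x - u) := by simp only [a]; module
  rw [hsplit, inner_sub_right (g a) (y - a), real_inner_smul_right]
  have : 1 - m = (1 - l) * (1 - supNorm u) := by ring
  linarith

end UpConcave

section Boosting

variable {d : ℕ}

lemma continuousOn_boostingWeight :
    ContinuousOn (fun z : ℝ => 1 / (3 * (1 - z / 2) ^ 3)) (Icc (0 : ℝ) 1) :=
  continuousOn_const.div (by fun_prop) fun z hz => by
    have : 0 < 1 - z / 2 := by linarith [hz.2]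
    positivity

lemma HasGradientAt.hasDerivAt_boostingPotential {f : EuclideanSpace ℝ (Fin d) → ℝ}
    {g' x u : EuclideanSpace ℝ (Fin d)} {z : ℝ} (A : ℝ)
    (hf : HasGradientAt f g' ((z / 2) • (x - u) + u)) (hz : 1 - z / 2 ≠ 0) :
    HasDerivAt
      (fun t => 2 / 3 * (A / (1 - t / 2) - f ((t / 2) • (x - u) + u) / (1 - t / 2) ^ 2))
      (1 / (3 * (1 - z / 2) ^ 3) * ((1 - z / 2) * A - 2 * f ((z / 2) • (x - u) + u)
        - (1 - z / 2) * ⟪g', x - u⟫)) z := by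
  have hγ : HasDerivAt (fun t : ℝ => (t / 2) • (x - u) + u) ((1 / 2 : ℝ) • (x - u)) z := by
    simpa using (((hasDerivAt_id z).div_const 2).smul_const (x - u)).add_const u
  have hφ := hf.hasFDerivAt.comp_hasDerivAt z hγ
  simp only [Function.comp_def, InnerProductSpace.toDual_apply_apply,
    real_inner_smul_right] at hφ
  have hc : HasDerivAt (fun t : ℝ => 1 - t / 2) (-(1 / 2)) z := by
    simpa using ((hasDerivAt_id z).div_const 2).const_sub 1
  refine ((((hasDerivAt_const z A).fun_div hc hz).fun_sub
    (hφ.fun_div (hc.fun_pow 2) (pow_ne_zero 2 hz))).const_mul (2 / 3 : ℝ)).congr_deriv ?_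
  generalize 1 - z / 2 = c at hz ⊢
  field_simp
  ring

lemma IsUpConcaveOn.le_integral_inner_along_segment {f : EuclideanSpace ℝ (Fin d) → ℝ}
    {g : EuclideanSpace ℝ (Fin d) → EuclideanSpace ℝ (Fin d)}
    (hfg : IsUpConcaveOn (unitBox d) f g) (hf₀ : ∀ x ∈ unitBox d, 0 ≤ f x)
    (hderiv : ∀ x ∈ unitBox d, HasGradientAt f (g x) x) {x y u : EuclideanSpace ℝ (Fin d)}
    (hx : x ∈ unitBox d) (hy : y ∈ unitBox d) (hu : u ∈ unitBox d)
    (hg : IntegrableOn (fun z => g ((z / 2) • (x - u) + u)) (Icc (0 : ℝ) 1)) :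
    2 / 3 * ((1 - supNorm u) * f y) - 8 / 3 * f ((1 / 2 : ℝ) • (x - u) + u) + 2 / 3 * f u ≤
      ∫ z in (0 : ℝ)..1, 1 / (3 * (1 - z / 2) ^ 3) * ⟪g ((z / 2) • (x - u) + u), y - x⟫ := by
  have hG : ∀ z ∈ Icc (0 : ℝ) 1, HasDerivAt _ _ z := fun z hz =>
    (hderiv _ (smul_sub_add_mem_unitBox hx hu (by linarith [hz.1]) (by linarith [hz.2]))
      ).hasDerivAt_boostingPotential ((1 - supNorm u) * f y) (by linarith [hz.2])
  have key := intervalIntegral.sub_le_integral_of_hasDeriv_right_of_le zero_le_one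
    (fun z hz => (hG z hz).continuousAt.continuousWithinAt)
    (fun z hz => (hG z (Ioo_subset_Icc_self hz)).hasDerivWithinAt)
    (IntegrableOn.continuousOn_mul continuousOn_boostingWeight (hg.inner_const (y - x))
      isCompact_Icc) fun z hz => by
    have : 0 < 1 - z / 2 := by linarith [hz.2]
    refine mul_le_mul_of_nonneg_left ?_ (by positivity)
    linarith [hfg.sub_le_inner_along_segment hf₀ hx hy hu (l := z / 2) (by linarith [hz.1])
      (by linarith [hz.2])]
  convert key using 1
  norm_num
  ring

end Boosting

theorem boosting_nonmonotone_upConcave_general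
    (d : ℕ) (M₁ : ℝ)
    (f : EuclideanSpace ℝ (Fin d) → ℝ)
    (g gF : EuclideanSpace ℝ (Fin d) → EuclideanSpace ℝ (Fin d))
    (hderiv : ∀ x ∈ unitBox d, HasGradientAt f (g x) x)
    (hnonneg : ∀ x ∈ unitBox d, 0 ≤ f x)
    (hupconcave : ∀ a ∈ unitBox d, ∀ b ∈ unitBox d, (∀ i, a i ≤ b i) →
      ⟪g b, b - a⟫ ≤ f b - f a ∧ f b - f a ≤ ⟪g a, b - a⟫)
    (hLip : ∀ a ∈ unitBox d, ∀ b ∈ unitBox d, |f a - f b| ≤ M₁ * ‖a - b‖)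
    (u : EuclideanSpace ℝ (Fin d)) (hu : u ∈ unitBox d)
    (hgF : ∀ x, gF x =
      ∫ z in (0 : ℝ)..1, (1 / (3 * (1 - z / 2) ^ 3)) • g ((z / 2) • (x - u) + u)) :
    ∀ x ∈ unitBox d, ∀ y ∈ unitBox d,
      (1 - supNorm u) / 4 * f y - f ((1 / 2 : ℝ) • (x + u)) ≤ 3 / 8 * ⟪gF x, y - x⟫ := by
  intro x hx y hy
  have hg : IntegrableOn (fun z => g ((z / 2) • (x - u) + u)) (Icc (0 : ℝ) 1) :=
    integrableOn_comp_of_hasGradientAt_of_norm_le (by fun_prop)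
      (fun z hz => smul_sub_add_mem_unitBox hx hu (by linarith [hz.1]) (by linarith [hz.2]))
      hderiv fun p hp => norm_le_of_hasGradientAt_of_lipschitzOn_unitBox hp (hderiv p hp) hLip
  have hgF_inner : ⟪gF x, y - x⟫ =
      ∫ z in (0 : ℝ)..1, 1 / (3 * (1 - z / 2) ^ 3) * ⟪g ((z / 2) • (x - u) + u), y - x⟫ := by
    rw [hgF, inner_intervalIntegral_left ((intervalIntegrable_iff_integrableOn_Icc_of_le
      zero_le_one).2 (hg.continuousOn_smul continuousOn_boostingWeight isCompact_Icc))]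
    simp only [real_inner_smul_left]
  have hbound := IsUpConcaveOn.le_integral_inner_along_segment hupconcave hnonneg hderiv hx hy hu hg
  rw [hgF_inner, show (1 / 2 : ℝ) • (x + u) = (1 / 2 : ℝ) • (x - u) + u by module]
  linarith [hnonneg u hu]

/-- Boosting lemma for non-monotone up-concave functions: with
`F(x) = ∫₀¹ [2/(3z(1−z/2)³)] (f((z/2)·(x−u)+u) − f(u)) dz` and
`∇F(x) = ∫₀¹ [1/(3(1−z/2)³)] ∇f((z/2)·(x−u)+u) dz`, for all `x, y ∈ [0,1]^d`,
`((1 − ‖u‖_∞)/4) f(y) − f((x+u)/2) ≤ (3/8) ⟨∇F(x), y − x⟩`. -/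
theorem boosting_nonmonotone_upConcave
    (d : ℕ) (M₁ : ℝ) (hM : 0 ≤ M₁)
    (f : EuclideanSpace ℝ (Fin d) → ℝ)
    (g gF : EuclideanSpace ℝ (Fin d) → EuclideanSpace ℝ (Fin d))
    (hderiv : ∀ x ∈ unitBox d, HasGradientAt f (g x) x)
    (hnonneg : ∀ x ∈ unitBox d, 0 ≤ f x)
    (hupconcave : ∀ a ∈ unitBox d, ∀ b ∈ unitBox d, (∀ i, a i ≤ b i) →
      ⟪g b, b - a⟫ ≤ f b - f a ∧ f b - f a ≤ ⟪g a, b - a⟫)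
    (hLip : ∀ a ∈ unitBox d, ∀ b ∈ unitBox d, |f a - f b| ≤ M₁ * ‖a - b‖)
    (u : EuclideanSpace ℝ (Fin d)) (hu : u ∈ unitBox d)
    (hgF : ∀ x, gF x =
      ∫ z in (0 : ℝ)..1, (1 / (3 * (1 - z / 2) ^ 3)) • g ((z / 2) • (x - u) + u)) :
    ∀ x ∈ unitBox d, ∀ y ∈ unitBox d,
      (1 - supNorm u) / 4 * f y - f ((1 / 2 : ℝ) • (x + u)) ≤ 3 / 8 * ⟪gF x, y - x⟫ :=
  boosting_nonmonotone_upConcave_general d M₁ f g gF hderiv hnonneg hupconcave hLip u hu hgF
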